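/- Let d ∈ ℕ with d ≥ 1 and let α, β, γ ∈ [0,∞) satisfy α + β > d/2 and max(α,β) ≠ d/2. Then sup_{v ∈ ℤ^d} Σ_{k ∈ ℤ^d} (λ_v)^γ / [(λ_k)^α (λ_{v−k})^β] < ∞ if and only if γ ≤ min(α, β, α + β − d/2). -/

import Mathlib

open scoped ENNReal

/-- `λ_x = 1 + x₁² + ⋯ + x_d²` for a lattice point `x ∈ ℤ^d`. -/
noncomputable def lam {d : ℕ} (x : Fin d → ℤ) : ℝ := 1 + ∑ i, ((x i : ℝ)) ^ 2

/-!
If `λ_k ≤ λ_{v-k}`, then `λ_{v-k} ≥ max(λ_v, λ_k)/4`, so the summand is at most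
`4^β λ_v^γ λ_k^{-α} max(λ_v, λ_k)^{-β}`; the other case is symmetric under `k ↦ v - k`.
The dyadic shell `2^n ≤ λ_k < 2^{n+1}` holds `O(2^{nd/2})` lattice points, whence
`∑_{λ_k ≤ R} λ_k^{-s} = O(R^{d/2-s})` for `s < d/2` and `∑_{λ_k ≥ T} λ_k^{-s} = O(T^{d/2-s})`
for `s > d/2`. Splitting the dominating sum at `λ_k = λ_v` bounds it uniformly in `v` when
`γ ≤ min(α, β, α + β - d/2)`; `max(α, β) ≠ d/2` rules out the logarithmic case `s = d/2`.

Conversely, along the diagonal `v = (n, …, n)` the terms `k = v` and `k = 0` are `λ_v^{γ-α}`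
and `λ_v^{γ-β}`, and each of the `(n+1)^d ≳ λ_v^{d/2}` points of the cube `[0, n]^d`
contributes at least `λ_v^{γ-α-β}`.
-/

open Finset

lemma iSup_tsum_ofReal_lt_top_iff {ι κ : Type*} {f : ι → κ → ℝ}
    (hf : ∀ i j, 0 ≤ f i j) :
    (⨆ i, ∑' j, ENNReal.ofReal (f i j)) < ⊤ ↔
      ∃ C : ℝ, ∀ i (s : Finset κ), ∑ j ∈ s, f i j ≤ C := by
  have hsum (i : ι) (s : Finset κ) :
      ENNReal.ofReal (∑ j ∈ s, f i j) = ∑ j ∈ s, ENNReal.ofReal (f i j) :=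
    ENNReal.ofReal_sum_of_nonneg fun j _ => hf i j
  constructor
  · intro h
    refine ⟨(⨆ i, ∑' j, ENNReal.ofReal (f i j)).toReal, fun i s => ?_⟩
    rw [← ENNReal.ofReal_le_iff_le_toReal h.ne, hsum]
    exact (ENNReal.sum_le_tsum s).trans (le_iSup (fun i => ∑' j, ENNReal.ofReal (f i j)) i)
  · rintro ⟨C, hC⟩
    refine lt_of_le_of_lt (iSup_le fun i => ?_) (ENNReal.ofReal_lt_top (r := C))
    rw [ENNReal.tsum_eq_iSup_sum]
    exact iSup_le fun s => hsum i s ▸ ENNReal.ofReal_le_ofReal (hC i s)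

lemma div_le_four_rpow_mul_of_max_le {L K M α β γ : ℝ} (hL : 0 < L) (hK : 0 < K)
    (hβ : 0 ≤ β) (h : max L K ≤ 4 * M) :
    L ^ γ / (K ^ α * M ^ β) ≤ 4 ^ β * (L ^ γ * K ^ (-α) * max L K ^ (-β)) := by
  have hm : 0 < max L K := lt_max_of_lt_left hL
  calc L ^ γ / (K ^ α * M ^ β) ≤ L ^ γ / (K ^ α * (max L K / 4) ^ β) := by
        gcongr
        linarith
    _ = 4 ^ β * (L ^ γ * K ^ (-α) * max L K ^ (-β)) := by
        rw [Real.div_rpow hm.le (by norm_num), Real.rpow_neg hK.le, Real.rpow_neg hm.le]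
        field_simp

variable {d : ℕ}

lemma one_le_lam (x : Fin d → ℤ) : 1 ≤ lam x := by
  have : 0 ≤ ∑ i, ((x i : ℝ)) ^ 2 := sum_nonneg fun i _ => sq_nonneg _
  rw [lam]; linarith

lemma lam_pos (x : Fin d → ℤ) : 0 < lam x := one_pos.trans_le (one_le_lam x)

lemma sq_le_lam (x : Fin d → ℤ) (i : Fin d) : ((x i : ℝ)) ^ 2 ≤ lam x := by
  have : ((x i : ℝ)) ^ 2 ≤ ∑ j, ((x j : ℝ)) ^ 2 :=
    single_le_sum (f := fun j => ((x j : ℝ)) ^ 2) (fun j _ => sq_nonneg _) (mem_univ i)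
  rw [lam]; linarith

lemma lam_zero : lam (0 : Fin d → ℤ) = 1 := by simp [lam]

lemma lam_add_le (a b : Fin d → ℤ) : lam (a + b) ≤ 2 * lam a + 2 * lam b := by
  have hcoord (i : Fin d) :
      (((a + b) i : ℤ) : ℝ) ^ 2 ≤ 2 * (a i : ℝ) ^ 2 + 2 * (b i : ℝ) ^ 2 := by
    push_cast [Pi.add_apply]
    nlinarith [sq_nonneg ((a i : ℝ) - b i)]
  have := sum_le_sum fun i (_ : i ∈ univ) => hcoord i
  rw [sum_add_distrib, ← mul_sum, ← mul_sum] at this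
  simp only [lam]
  linarith

lemma lam_le_add_lam_sub (v k : Fin d → ℤ) : lam v ≤ 2 * lam k + 2 * lam (v - k) := by
  simpa using lam_add_le k (v - k)

lemma card_le_of_forall_lam_le {R : ℝ} (hR : 1 ≤ R) (F : Finset (Fin d → ℤ))
    (hF : ∀ k ∈ F, lam k ≤ R) : (#F : ℝ) ≤ 3 ^ d * R ^ ((d : ℝ) / 2) := by
  set m : ℤ := ⌊√R⌋
  have hsub : F ⊆ Fintype.piFinset fun _ => Icc (-m) m := by
    intro k hk
    refine Fintype.mem_piFinset.2 fun i => mem_Icc.2 (abs_le.1 (Int.le_floor.2 ?_))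
    push_cast
    exact Real.abs_le_sqrt ((sq_le_lam k i).trans (hF k hk))
  have hm : ((#(Icc (-m) m) : ℕ) : ℝ) ≤ 3 * √R := by
    have hm0 : 0 ≤ m := Int.floor_nonneg.2 (Real.sqrt_nonneg R)
    have : (m : ℝ) ≤ √R := Int.floor_le _
    have : 1 ≤ √R := Real.one_le_sqrt.2 hR
    rw [Int.card_Icc, show m + 1 - -m = 2 * m + 1 by ring, ← Int.cast_natCast,
      Int.toNat_of_nonneg (by omega)]
    push_cast
    linarith
  calc (#F : ℝ) ≤ ∏ _i : Fin d, ((#(Icc (-m) m) : ℕ) : ℝ) := by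
        rw [← Nat.cast_prod, ← Fintype.card_piFinset]
        exact_mod_cast card_le_card hsub
    _ ≤ (3 * √R) ^ d := by
        rw [prod_const, card_univ, Fintype.card_fin]
        exact pow_le_pow_left₀ (Nat.cast_nonneg _) hm d
    _ = 3 ^ d * R ^ ((d : ℝ) / 2) := by
        rw [mul_pow, Real.sqrt_eq_rpow, ← Real.rpow_natCast (R ^ (1 / 2 : ℝ)),
          ← Real.rpow_mul (by linarith)]
        ring_nf

noncomputable def dyadicIndex (x : ℝ) : ℕ := Nat.log 2 ⌊x⌋₊

lemma dyadicIndex_mono : Monotone dyadicIndex :=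
  fun _ _ h => Nat.log_mono_right (Nat.floor_le_floor h)

lemma two_pow_dyadicIndex_le {x : ℝ} (hx : 1 ≤ x) : (2 : ℝ) ^ dyadicIndex x ≤ x := by
  have hfloor : ⌊x⌋₊ ≠ 0 := (Nat.floor_pos.2 hx).ne'
  calc (2 : ℝ) ^ dyadicIndex x ≤ ⌊x⌋₊ := by exact_mod_cast Nat.pow_log_le_self 2 hfloor
    _ ≤ x := Nat.floor_le (by linarith)

lemma lt_two_pow_dyadicIndex_succ (x : ℝ) : x < 2 ^ (dyadicIndex x + 1) := by
  calc x < ⌊x⌋₊ + 1 := Nat.lt_floor_add_one x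
    _ ≤ (2 : ℝ) ^ (dyadicIndex x + 1) := by
        exact_mod_cast Nat.lt_pow_succ_log_self one_lt_two _

lemma sum_rpow_neg_le_sum_dyadic {s : ℝ} (hs : 0 ≤ s) (F : Finset (Fin d → ℤ)) :
    ∑ k ∈ F, lam k ^ (-s) ≤ 3 ^ d * 2 ^ ((d : ℝ) / 2) *
      ∑ n ∈ F.image fun k => dyadicIndex (lam k), ((2 : ℝ) ^ ((d : ℝ) / 2 - s)) ^ n := by
  rw [← sum_fiberwise_of_maps_to (g := fun k => dyadicIndex (lam k))
    (fun k hk => mem_image_of_mem (fun k => dyadicIndex (lam k)) hk), mul_sum]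
  refine sum_le_sum fun n _ => ?_
  set G := F.filter fun k => dyadicIndex (lam k) = n
  have hterm : ∀ k ∈ G, lam k ^ (-s) ≤ ((2 : ℝ) ^ n) ^ (-s) := fun k hk =>
    Real.rpow_le_rpow_of_nonpos (by positivity)
      ((mem_filter.1 hk).2 ▸ two_pow_dyadicIndex_le (one_le_lam k)) (by linarith)
  have hcard : (#G : ℝ) ≤ 3 ^ d * ((2 : ℝ) ^ (n + 1)) ^ ((d : ℝ) / 2) :=
    card_le_of_forall_lam_le (one_le_pow₀ one_le_two) G fun k hk =>
      ((mem_filter.1 hk).2 ▸ lt_two_pow_dyadicIndex_succ (lam k)).le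
  calc ∑ k ∈ G, lam k ^ (-s) ≤ #G * ((2 : ℝ) ^ n) ^ (-s) := by
        simpa using sum_le_card_nsmul G _ _ hterm
    _ ≤ 3 ^ d * ((2 : ℝ) ^ (n + 1)) ^ ((d : ℝ) / 2) * ((2 : ℝ) ^ n) ^ (-s) := by gcongr
    _ = 3 ^ d * 2 ^ ((d : ℝ) / 2) * ((2 : ℝ) ^ ((d : ℝ) / 2 - s)) ^ n := by
        rw [← Real.rpow_pow_comm two_pos.le, ← Real.rpow_pow_comm two_pos.le, sub_eq_add_neg,
          Real.rpow_add two_pos, mul_pow, pow_succ]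
        ring

lemma exists_sum_rpow_neg_le_of_le_lam {s : ℝ} (hs : (d : ℝ) / 2 < s) :
    ∃ C, ∀ T ≥ 1, ∀ F : Finset (Fin d → ℤ), (∀ k ∈ F, T ≤ lam k) →
      ∑ k ∈ F, lam k ^ (-s) ≤ C * T ^ ((d : ℝ) / 2 - s) := by
  set x : ℝ := 2 ^ ((d : ℝ) / 2 - s)
  have hx1 : x < 1 := Real.rpow_lt_one_of_one_lt_of_neg one_lt_two (by linarith)
  refine ⟨3 ^ d * 2 ^ ((d : ℝ) / 2) * (2 ^ (s - d / 2) / (1 - x)), fun T hT F hF => ?_⟩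
  set t := F.image fun k => dyadicIndex (lam k)
  have hgeom : ∑ n ∈ t, x ^ n ≤ x ^ dyadicIndex T / (1 - x) := by
    refine le_trans (sum_le_sum_of_subset_of_nonneg (fun n hn => ?_) fun _ _ _ => by positivity)
      (geom_sum_Ico_le_of_lt_one (by positivity) hx1 (n := t.sup id + 1))
    obtain ⟨k, hk, rfl⟩ := mem_image.1 hn
    exact mem_Ico.2 ⟨dyadicIndex_mono (hF k hk), Nat.lt_succ_of_le (le_sup (f := id) hn)⟩
  have hxN : x ^ dyadicIndex T ≤ 2 ^ (s - d / 2) * T ^ ((d : ℝ) / 2 - s) := by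
    have hT2 : T / 2 ≤ 2 ^ dyadicIndex T := by
      have := lt_two_pow_dyadicIndex_succ T
      rw [pow_succ] at this
      linarith
    calc x ^ dyadicIndex T = ((2 : ℝ) ^ dyadicIndex T) ^ ((d : ℝ) / 2 - s) :=
          Real.rpow_pow_comm two_pos.le _ _
      _ ≤ (T / 2) ^ ((d : ℝ) / 2 - s) :=
          Real.rpow_le_rpow_of_nonpos (by positivity) hT2 (by linarith)
      _ = 2 ^ (s - d / 2) * T ^ ((d : ℝ) / 2 - s) := by
          rw [Real.div_rpow (by linarith) two_pos.le, div_eq_mul_inv, ← Real.rpow_neg two_pos.le,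
            neg_sub, mul_comm]
  calc ∑ k ∈ F, lam k ^ (-s) ≤ 3 ^ d * 2 ^ ((d : ℝ) / 2) * ∑ n ∈ t, x ^ n :=
        sum_rpow_neg_le_sum_dyadic ((by positivity : (0 : ℝ) ≤ d / 2).trans hs.le) F
    _ ≤ 3 ^ d * 2 ^ ((d : ℝ) / 2) * (2 ^ (s - d / 2) * T ^ ((d : ℝ) / 2 - s) / (1 - x)) := by
        gcongr
        exact hgeom.trans (div_le_div_of_nonneg_right hxN (by linarith))
    _ = _ := by ring

lemma exists_sum_rpow_neg_le_of_lam_le {s : ℝ} (hs0 : 0 ≤ s) (hs : s < (d : ℝ) / 2) :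
    ∃ C, ∀ R ≥ 1, ∀ F : Finset (Fin d → ℤ), (∀ k ∈ F, lam k ≤ R) →
      ∑ k ∈ F, lam k ^ (-s) ≤ C * R ^ ((d : ℝ) / 2 - s) := by
  set x : ℝ := 2 ^ ((d : ℝ) / 2 - s)
  have hx1 : 1 < x := Real.one_lt_rpow one_lt_two (by linarith)
  refine ⟨3 ^ d * 2 ^ ((d : ℝ) / 2) * (x / (x - 1)), fun R hR F hF => ?_⟩
  set N := dyadicIndex R
  have hgeom : ∑ n ∈ F.image fun k => dyadicIndex (lam k), x ^ n ≤ x ^ N * (x / (x - 1)) := by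
    calc _ ≤ ∑ n ∈ range (N + 1), x ^ n := by
          refine sum_le_sum_of_subset_of_nonneg (fun n hn => ?_) fun _ _ _ => by positivity
          obtain ⟨k, hk, rfl⟩ := mem_image.1 hn
          exact mem_range_succ_iff.2 (dyadicIndex_mono (hF k hk))
      _ = (x ^ (N + 1) - 1) / (x - 1) := geom_sum_eq hx1.ne' _
      _ ≤ x ^ (N + 1) / (x - 1) := div_le_div_of_nonneg_right (by linarith) (by linarith)
      _ = x ^ N * (x / (x - 1)) := by ring
  have hxN : x ^ N ≤ R ^ ((d : ℝ) / 2 - s) := by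
    rw [Real.rpow_pow_comm two_pos.le]
    exact Real.rpow_le_rpow (by positivity) (two_pow_dyadicIndex_le hR) (by linarith)
  have hx : 0 ≤ x / (x - 1) := div_nonneg (by linarith) (by linarith)
  calc ∑ k ∈ F, lam k ^ (-s)
        ≤ 3 ^ d * 2 ^ ((d : ℝ) / 2) * ∑ n ∈ F.image fun k => dyadicIndex (lam k), x ^ n :=
        sum_rpow_neg_le_sum_dyadic hs0 F
    _ ≤ 3 ^ d * 2 ^ ((d : ℝ) / 2) * (R ^ ((d : ℝ) / 2 - s) * (x / (x - 1))) := by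
        gcongr
        exact hgeom.trans (mul_le_mul_of_nonneg_right hxN hx)
    _ = _ := by ring

lemma exists_sum_rpow_neg_le_rpow_of_lam_le {s t : ℝ} (hs : 0 ≤ s) (ht : 0 ≤ t)
    (hst : (d : ℝ) / 2 ≤ s + t) (hcrit : s < (d : ℝ) / 2 ∨ (d : ℝ) / 2 < s + t) :
    ∃ C, ∀ R ≥ 1, ∀ F : Finset (Fin d → ℤ), (∀ k ∈ F, lam k ≤ R) →
      ∑ k ∈ F, lam k ^ (-s) ≤ C * R ^ t := by
  rcases hst.lt_or_eq with hlt | heq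
  · obtain ⟨C, hC⟩ := exists_sum_rpow_neg_le_of_le_lam (d := d) hlt
    refine ⟨C, fun R hR F hF => ?_⟩
    calc ∑ k ∈ F, lam k ^ (-s) = ∑ k ∈ F, lam k ^ t * lam k ^ (-(s + t)) := by
          refine sum_congr rfl fun k _ => ?_
          rw [← Real.rpow_add (lam_pos k)]
          ring_nf
      _ ≤ ∑ k ∈ F, R ^ t * lam k ^ (-(s + t)) := by
          refine sum_le_sum fun k hk => mul_le_mul_of_nonneg_right ?_
            (Real.rpow_nonneg (lam_pos k).le _)
          exact Real.rpow_le_rpow (lam_pos k).le (hF k hk) ht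
      _ ≤ R ^ t * (C * 1 ^ ((d : ℝ) / 2 - (s + t))) := by
          rw [← mul_sum]
          gcongr
          exact hC 1 le_rfl F fun k _ => one_le_lam k
      _ = C * R ^ t := by rw [Real.one_rpow]; ring
  · obtain ⟨C, hC⟩ :=
      exists_sum_rpow_neg_le_of_lam_le (d := d) hs (hcrit.resolve_right heq.not_lt)
    exact ⟨C, fun R hR F hF => by simpa [heq] using hC R hR F hF⟩

lemma exists_sum_rpow_mul_max_rpow_le {α β γ : ℝ} (hα : 0 ≤ α) (hγβ : γ ≤ β)
    (hγ : γ ≤ α + β - d / 2) (hαβ : (d : ℝ) / 2 < α + β)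
    (hcrit : α ≠ (d : ℝ) / 2 ∨ γ < β) :
    ∃ C, ∀ L ≥ 1, ∀ F : Finset (Fin d → ℤ),
      ∑ k ∈ F, L ^ γ * lam k ^ (-α) * max L (lam k) ^ (-β) ≤ C := by
  have hcrit' : α < (d : ℝ) / 2 ∨ (d : ℝ) / 2 < α + (β - γ) := by
    rcases lt_trichotomy α (d / 2) with h | h | h
    · exact .inl h
    · exact .inr (by linarith [hcrit.resolve_left (not_not.2 h)])
    · exact .inr (by linarith)
  obtain ⟨C₁, hC₁⟩ :=
    exists_sum_rpow_neg_le_rpow_of_lam_le (d := d) hα (sub_nonneg.2 hγβ) (by linarith) hcrit'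
  obtain ⟨C₂, hC₂⟩ := exists_sum_rpow_neg_le_of_le_lam (d := d) hαβ
  have hC₂0 : 0 ≤ C₂ := by simpa using hC₂ 1 le_rfl ∅ (by simp)
  refine ⟨C₁ + C₂, fun L hL F => ?_⟩
  have hL0 : 0 < L := by linarith
  rw [← sum_filter_add_sum_filter_not F fun k => lam k ≤ L]
  gcongr ?_ + ?_
  · calc _ = L ^ (γ - β) * ∑ k ∈ F with lam k ≤ L, lam k ^ (-α) := by
          rw [mul_sum]
          refine sum_congr rfl fun k hk => ?_
          rw [max_eq_left (mem_filter.1 hk).2, sub_eq_add_neg, Real.rpow_add hL0]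
          ring
      _ ≤ L ^ (γ - β) * (C₁ * L ^ (β - γ)) := by
          gcongr
          exact hC₁ L hL _ fun k hk => (mem_filter.1 hk).2
      _ = C₁ := by
          rw [mul_left_comm, ← Real.rpow_add hL0, sub_add_sub_cancel, sub_self, Real.rpow_zero,
            mul_one]
  · calc _ = L ^ γ * ∑ k ∈ F with ¬lam k ≤ L, lam k ^ (-(α + β)) := by
          rw [mul_sum]
          refine sum_congr rfl fun k hk => ?_
          rw [max_eq_right (not_le.1 (mem_filter.1 hk).2).le, neg_add, Real.rpow_add (lam_pos k)]
          ring
      _ ≤ L ^ γ * (C₂ * L ^ ((d : ℝ) / 2 - (α + β))) := by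
          gcongr
          exact hC₂ L hL _ fun k hk => (not_le.1 (mem_filter.1 hk).2).le
      _ = C₂ * L ^ (γ + ((d : ℝ) / 2 - (α + β))) := by rw [Real.rpow_add hL0]; ring
      _ ≤ C₂ :=
          mul_le_of_le_one_right hC₂0 (Real.rpow_le_one_of_one_le_of_nonpos hL (by linarith))

lemma conv_summand_le {α β γ : ℝ} (hα : 0 ≤ α) (hβ : 0 ≤ β) (v k : Fin d → ℤ) :
    lam v ^ γ / (lam k ^ α * lam (v - k) ^ β) ≤
      4 ^ β * (lam v ^ γ * lam k ^ (-α) * max (lam v) (lam k) ^ (-β)) +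
        4 ^ α * (lam v ^ γ * lam (v - k) ^ (-β) * max (lam v) (lam (v - k)) ^ (-α)) := by
  have hv := lam_le_add_lam_sub v k
  have := lam_pos v; have := lam_pos k; have := lam_pos (v - k)
  rcases le_total (lam k) (lam (v - k)) with h | h
  · refine le_add_of_le_of_nonneg ?_ (by positivity)
    exact div_le_four_rpow_mul_of_max_le (lam_pos v) (lam_pos k) hβ
      (max_le (by linarith) (by linarith))
  · refine le_add_of_nonneg_of_le (by positivity) ?_
    rw [mul_comm]
    exact div_le_four_rpow_mul_of_max_le (lam_pos v) (lam_pos _) hα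
      (max_le (by linarith) (by linarith))

lemma exists_sum_conv_summand_le {α β γ : ℝ} (hα : 0 ≤ α) (hβ : 0 ≤ β)
    (hαβ : (d : ℝ) / 2 < α + β) (hmax : max α β ≠ (d : ℝ) / 2)
    (hγ : γ ≤ min α (min β (α + β - (d : ℝ) / 2))) :
    ∃ C, ∀ (v : Fin d → ℤ) (F : Finset (Fin d → ℤ)),
      ∑ k ∈ F, lam v ^ γ / (lam k ^ α * lam (v - k) ^ β) ≤ C := by
  simp only [le_min_iff] at hγ
  obtain ⟨hγα, hγβ, hγαβ⟩ := hγ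
  have hcritα : α ≠ (d : ℝ) / 2 ∨ γ < β := by
    by_contra! h
    exact hmax ((max_eq_left (h.2.trans hγα)).trans h.1)
  have hcritβ : β ≠ (d : ℝ) / 2 ∨ γ < α := by
    by_contra! h
    exact hmax ((max_eq_right (h.2.trans hγβ)).trans h.1)
  obtain ⟨C₁, hC₁⟩ := exists_sum_rpow_mul_max_rpow_le (d := d) hα hγβ hγαβ hαβ hcritα
  obtain ⟨C₂, hC₂⟩ :=
    exists_sum_rpow_mul_max_rpow_le (d := d) hβ hγα (by linarith) (by linarith) hcritβ
  refine ⟨4 ^ β * C₁ + 4 ^ α * C₂, fun v F => ?_⟩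
  calc _ ≤ ∑ k ∈ F, (4 ^ β * (lam v ^ γ * lam k ^ (-α) * max (lam v) (lam k) ^ (-β)) +
          4 ^ α * (lam v ^ γ * lam (v - k) ^ (-β) * max (lam v) (lam (v - k)) ^ (-α))) :=
        sum_le_sum fun k _ => conv_summand_le hα hβ v k
    _ = 4 ^ β * ∑ k ∈ F, lam v ^ γ * lam k ^ (-α) * max (lam v) (lam k) ^ (-β) +
          4 ^ α * ∑ j ∈ F.image (v - ·),
            lam v ^ γ * lam j ^ (-β) * max (lam v) (lam j) ^ (-α) := by
        rw [sum_add_distrib, ← mul_sum, ← mul_sum,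
          sum_image fun _ _ _ _ h => sub_right_injective h]
    _ ≤ 4 ^ β * C₁ + 4 ^ α * C₂ := by
        gcongr
        exacts [hC₁ _ (one_le_lam v) F, hC₂ _ (one_le_lam v) _]

def diagPoint (d n : ℕ) : Fin d → ℤ := fun _ => n

noncomputable def cube (d n : ℕ) : Finset (Fin d → ℤ) := Fintype.piFinset fun _ => Icc 0 n

lemma lam_diagPoint (n : ℕ) : lam (diagPoint d n) = 1 + d * (n : ℝ) ^ 2 := by
  simp [lam, diagPoint]

lemma card_cube (n : ℕ) : (#(cube d n) : ℝ) = ((n : ℝ) + 1) ^ d := by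
  simp [cube]

lemma lam_le_lam_diagPoint_of_mem_cube {n : ℕ} {k : Fin d → ℤ} (hk : k ∈ cube d n) :
    lam k ≤ lam (diagPoint d n) := by
  simp only [lam, diagPoint]
  gcongr with i
  · exact_mod_cast (mem_Icc.1 (Fintype.mem_piFinset.1 hk i)).1
  · exact_mod_cast (mem_Icc.1 (Fintype.mem_piFinset.1 hk i)).2

lemma diagPoint_sub_mem_cube {n : ℕ} {k : Fin d → ℤ} (hk : k ∈ cube d n) :
    diagPoint d n - k ∈ cube d n := by
  refine Fintype.mem_piFinset.2 fun i => ?_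
  have := mem_Icc.1 (Fintype.mem_piFinset.1 hk i)
  simp only [diagPoint, Pi.sub_apply, mem_Icc]
  omega

lemma mul_lam_diagPoint_rpow_le_sum_cube {α β γ : ℝ} (hα : 0 ≤ α) (hβ : 0 ≤ β)
    (n : ℕ) :
    ((d : ℝ) + 1) ^ (-((d : ℝ) / 2)) * lam (diagPoint d n) ^ (γ - α - β + (d : ℝ) / 2) ≤
      ∑ k ∈ cube d n, lam (diagPoint d n) ^ γ /
        (lam k ^ α * lam (diagPoint d n - k) ^ β) := by
  set L := lam (diagPoint d n) with hL_def
  have hL : 0 < L := lam_pos _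
  have hterm : ∀ k ∈ cube d n,
      L ^ (γ - α - β) ≤ L ^ γ / (lam k ^ α * lam (diagPoint d n - k) ^ β) := by
    intro k hk
    rw [sub_sub, Real.rpow_sub hL, Real.rpow_add hL]
    have := lam_pos k; have := lam_pos (diagPoint d n - k)
    gcongr
    exacts [lam_le_lam_diagPoint_of_mem_cube hk,
      lam_le_lam_diagPoint_of_mem_cube (diagPoint_sub_mem_cube hk)]
  have hcard : L ^ ((d : ℝ) / 2) ≤ ((d : ℝ) + 1) ^ ((d : ℝ) / 2) * #(cube d n) := by
    have : L ≤ ((d : ℝ) + 1) * ((n : ℝ) + 1) ^ 2 := by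
      rw [hL_def, lam_diagPoint]
      nlinarith [(Nat.cast_nonneg n : (0 : ℝ) ≤ n), (Nat.cast_nonneg d : (0 : ℝ) ≤ d)]
    calc L ^ ((d : ℝ) / 2) ≤ (((d : ℝ) + 1) * ((n : ℝ) + 1) ^ 2) ^ ((d : ℝ) / 2) := by
          gcongr
      _ = ((d : ℝ) + 1) ^ ((d : ℝ) / 2) * #(cube d n) := by
          rw [Real.mul_rpow (by positivity) (by positivity), card_cube, ← Real.rpow_natCast,
            ← Real.rpow_natCast _ d, ← Real.rpow_mul (by positivity)]
          ring_nf
  calc ((d : ℝ) + 1) ^ (-((d : ℝ) / 2)) * L ^ (γ - α - β + (d : ℝ) / 2)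
        = ((d : ℝ) + 1) ^ (-((d : ℝ) / 2)) * L ^ ((d : ℝ) / 2) * L ^ (γ - α - β) := by
        rw [Real.rpow_add hL]
        ring
    _ ≤ #(cube d n) * L ^ (γ - α - β) := by
        gcongr
        rw [Real.rpow_neg (by positivity), inv_mul_le_iff₀ (by positivity)]
        exact hcard
    _ ≤ _ := by simpa using card_nsmul_le_sum _ _ _ hterm

lemma nonpos_of_forall_mul_lam_diagPoint_rpow_le (hd : 1 ≤ d) {c e B : ℝ} (hc : 0 < c)
    (h : ∀ n : ℕ, c * lam (diagPoint d n) ^ e ≤ B) : e ≤ 0 := by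
  by_contra! he
  have hlam : Filter.Tendsto (fun n => lam (diagPoint d n)) Filter.atTop Filter.atTop := by
    refine Filter.tendsto_atTop_mono (fun n => ?_) tendsto_natCast_atTop_atTop
    have : (1 : ℝ) ≤ d := by exact_mod_cast hd
    rw [lam_diagPoint]
    nlinarith [sq_nonneg ((n : ℝ) - 1)]
  obtain ⟨n, hn⟩ :=
    (((tendsto_rpow_atTop he).comp hlam).const_mul_atTop hc).eventually_gt_atTop B |>.exists
  exact (h n).not_gt hn

lemma le_min_of_forall_sum_conv_summand_le (hd : 1 ≤ d) {α β γ B : ℝ} (hα : 0 ≤ α)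
    (hβ : 0 ≤ β) (hB : ∀ (v : Fin d → ℤ) (F : Finset (Fin d → ℤ)),
      ∑ k ∈ F, lam v ^ γ / (lam k ^ α * lam (v - k) ^ β) ≤ B) :
    γ ≤ min α (min β (α + β - (d : ℝ) / 2)) := by
  have hdiag : γ - α ≤ 0 := nonpos_of_forall_mul_lam_diagPoint_rpow_le hd one_pos fun n => by
    have := hB (diagPoint d n) {diagPoint d n}
    rwa [sum_singleton, sub_self, lam_zero, Real.one_rpow, mul_one, ← Real.rpow_sub (lam_pos _),
      ← one_mul (_ ^ _)] at this
  have hzero : γ - β ≤ 0 := nonpos_of_forall_mul_lam_diagPoint_rpow_le hd one_pos fun n => by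
    have := hB (diagPoint d n) {0}
    rwa [sum_singleton, sub_zero, lam_zero, Real.one_rpow, one_mul, ← Real.rpow_sub (lam_pos _),
      ← one_mul (_ ^ _)] at this
  have hcube : γ - α - β + (d : ℝ) / 2 ≤ 0 :=
    nonpos_of_forall_mul_lam_diagPoint_rpow_le hd (by positivity) fun n =>
      (mul_lam_diagPoint_rpow_le_sum_cube hα hβ n).trans (hB _ _)
  simp only [le_min_iff]
  exact ⟨by linarith, by linarith, by linarith⟩

theorem discrete_conv_regularity_general (d : ℕ) (hd : 1 ≤ d) (α β γ : ℝ)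
    (hα : 0 ≤ α) (hβ : 0 ≤ β)
    (hsum : α + β > (d : ℝ) / 2) (hmax : max α β ≠ (d : ℝ) / 2) :
    (⨆ v : Fin d → ℤ, ∑' k : Fin d → ℤ,
        ENNReal.ofReal ((lam v) ^ γ / ((lam k) ^ α * (lam (v - k)) ^ β))) < ⊤
      ↔ γ ≤ min α (min β (α + β - (d : ℝ) / 2)) := by
  rw [iSup_tsum_ofReal_lt_top_iff fun v k =>
    div_nonneg (Real.rpow_nonneg (lam_pos v).le _)
      (mul_nonneg (Real.rpow_nonneg (lam_pos k).le _) (Real.rpow_nonneg (lam_pos (v - k)).le _))]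
  exact ⟨fun ⟨_, hB⟩ => le_min_of_forall_sum_conv_summand_le hd hα hβ hB,
    exists_sum_conv_summand_le hα hβ hsum hmax⟩

/-- Regularity of discrete convolutions:
if `α + β > d/2` and `max(α,β) ≠ d/2`, then
`sup_{v ∈ ℤ^d} Σ_{k ∈ ℤ^d} (λ_v)^γ / [(λ_k)^α (λ_{v−k})^β] < ∞`
if and only if `γ ≤ min(α, β, α + β − d/2)`. -/
theorem discrete_conv_regularity (d : ℕ) (hd : 1 ≤ d) (α β γ : ℝ)
    (hα : 0 ≤ α) (hβ : 0 ≤ β) (hγ : 0 ≤ γ)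
    (hsum : α + β > (d : ℝ) / 2) (hmax : max α β ≠ (d : ℝ) / 2) :
    (⨆ v : Fin d → ℤ, ∑' k : Fin d → ℤ,
        ENNReal.ofReal ((lam v) ^ γ / ((lam k) ^ α * (lam (v - k)) ^ β))) < ⊤
      ↔ γ ≤ min α (min β (α + β - (d : ℝ) / 2)) :=
  discrete_conv_regularity_general d hd α β γ hα hβ hsum hmax
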